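/- Let p: [0,T] → ℝ solve the ODE p'(t) = 2γ(1 − p(t)/(σ + κ_t λ)) with p(0) = σ + λ, where κ_t = (T−t)/T and σ, λ, γ, T > 0. Then (p(T) − σ)/σ = Ψ(α, r), where r = λ/σ, α = 2γT/λ, and Ψ(α,r) = ∫₁^{1+r} u^{−α} du. -/

import Mathlib

/-!
Normalise by `σ`: `x(t) = d(t)/σ = 1 + κ_t r` decreases linearly from `1 + r` to `1`, and
`e = p/σ - x` satisfies the linear equation `e' = x' (α e / x - 1)` with `e(0) = 0`.
With the integrating factor `x^{-α}`, the quantity `e x^{-α} + ∫_{x(T)}^{x} v^{-α} dv` is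
conserved; comparing its values at `t = 0` and `t = T` gives `e(T) = Ψ(α, r)`.
-/

open Set Real

theorem hasDerivAt_integral_rpow {s c y : ℝ} (hc : 0 < c) (hy : 0 < y) :
    HasDerivAt (fun y => ∫ v in c..y, v ^ s) (y ^ s) y :=
  intervalIntegral.integral_hasDerivAt_right
    (intervalIntegral.intervalIntegrable_rpow (Or.inr fun h => by
      rcases mem_uIcc.1 h with h | h <;> linarith [h.1, h.2]))
    (measurable_id.pow_const s).stronglyMeasurable.stronglyMeasurableAtFilter
    (continuousAt_id.rpow_const (Or.inl hy.ne'))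

theorem sub_eq_integral_rpow_of_hasDerivAt {a b α : ℝ} {x x' e : ℝ → ℝ} (hab : a ≤ b)
    (hx_pos : ∀ t ∈ Icc a b, 0 < x t) (hx : ∀ t ∈ Icc a b, HasDerivAt x (x' t) t)
    (he : ∀ t ∈ Icc a b, HasDerivAt e (x' t * (α * e t / x t - 1)) t) :
    e b * x b ^ (-α) - e a * x a ^ (-α) = ∫ v in x b..x a, v ^ (-α) := by
  set F : ℝ → ℝ := fun t => e t * x t ^ (-α) + ∫ v in x b..x t, v ^ (-α)
  have hF : ∀ t ∈ Icc a b, HasDerivAt F 0 t := by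
    intro t ht
    have hxt := hx_pos t ht
    have hpow := (hx t ht).rpow_const (p := -α) (Or.inl hxt.ne')
    have hint :=
      (hasDerivAt_integral_rpow (s := -α) (hx_pos b ⟨hab, le_rfl⟩) hxt).comp t (hx t ht)
    refine (((he t ht).mul hpow).add hint).congr_deriv ?_
    rw [rpow_sub_one hxt.ne']
    field_simp
    ring
  have hFb := constant_of_has_deriv_right_zero
    (fun t ht => (hF t ht).continuousAt.continuousWithinAt)
    (fun t ht => (hF t (Ico_subset_Icc_self ht)).hasDerivWithinAt) b ⟨hab, le_rfl⟩
  simp only [F, intervalIntegral.integral_same, add_zero] at hFb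
  linarith

theorem stmt8_general (σ lam γ T : ℝ) (hσ : 0 < σ) (hlam : 0 < lam)
    (hT : 0 < T) (p : ℝ → ℝ)
    (hp0 : p 0 = σ + lam)
    (hp : ∀ t ∈ Set.Icc (0 : ℝ) T,
      HasDerivAt p (2 * γ * (1 - p t / (σ + ((T - t) / T) * lam))) t) :
    (p T - σ) / σ = ∫ u in (1:ℝ)..(1 + lam / σ), u ^ (-(2 * γ * T / lam)) := by
  set x : ℝ → ℝ := fun t => 1 + (T - t) / T * (lam / σ)
  have hx : ∀ t, HasDerivAt x (-(lam / σ / T)) t := fun t =>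
    ((((hasDerivAt_id t).const_sub T).div_const T).mul_const _ |>.const_add 1).congr_deriv
      (by ring)
  have hx_pos : ∀ t ∈ Icc 0 T, 0 < x t := fun t ht => by
    have : 0 ≤ T - t := sub_nonneg.2 ht.2
    have : 0 ≤ (T - t) / T * (lam / σ) := by positivity
    linarith
  have he : ∀ t ∈ Icc 0 T, HasDerivAt (fun t => p t / σ - x t)
      (-(lam / σ / T) * (2 * γ * T / lam * (p t / σ - x t) / x t - 1)) t := fun t ht => by
    refine (((hp t ht).div_const σ).sub (hx t)).congr_deriv ?_
    have hd : σ + (T - t) / T * lam = σ * x t := by simp only [x]; field_simp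
    have := hx_pos t ht
    rw [hd]
    field_simp
    ring
  have hconserved := sub_eq_integral_rpow_of_hasDerivAt hT.le hx_pos (fun t _ => hx t) he
  have he0 : p 0 / σ - x 0 = 0 := by simp only [x, hp0]; field_simp; ring
  rw [he0, zero_mul, sub_zero] at hconserved
  simp only [x, sub_self, zero_div, zero_mul, add_zero, sub_zero, div_self hT.ne', one_mul,
    one_rpow, mul_one] at hconserved
  rw [← hconserved, sub_div, div_self hσ.ne']

/-- If `p` solves `p'(t) = 2γ(1 - p(t)/(σ + κ_t λ))` on `[0,T]`
with `p(0) = σ + λ` and `κ_t = (T-t)/T`, then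
`(p(T) - σ)/σ = Ψ(α, r) = ∫₁^{1+r} u^{-α} du` with `r = λ/σ`, `α = 2γT/λ`. -/
theorem stmt8 (σ lam γ T : ℝ) (hσ : 0 < σ) (hlam : 0 < lam) (hγ : 0 < γ)
    (hT : 0 < T) (p : ℝ → ℝ)
    (hp0 : p 0 = σ + lam)
    (hp : ∀ t ∈ Set.Icc (0 : ℝ) T,
      HasDerivAt p (2 * γ * (1 - p t / (σ + ((T - t) / T) * lam))) t) :
    (p T - σ) / σ = ∫ u in (1:ℝ)..(1 + lam / σ), u ^ (-(2 * γ * T / lam)) :=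
  stmt8_general σ lam γ T hσ hlam hT p hp0 hp
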